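/- arXiv:2005.04960 — 2 statements merged into one kernel-verified Lean document; each statement's English description precedes it below -/
import Mathlib

section
/- Conversely, if ψ : X → P is an open continuous surjection from a Hausdorff space X to a poset P with the Alexandrov topology, then the partition X = ⊔_{s∈P} ψ⁻¹(s) makes X a stratified space: each fiber is nonempty and locally closed, the frontier condition holds, and for every J ⊆ P, ∪_{j∈J} closure(ψ⁻¹(s_j)) = closure(∪_{j∈J} ψ⁻¹(s_j)). -/
/-- In an Alexandrov-topology poset, the closure of a set is its lower closure. -/
lemma alex_closure {P : Type*} [PartialOrder P] [TopologicalSpace P]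
    (halex : ∀ U : Set P, IsOpen U ↔ IsUpperSet U) (B : Set P) :
    closure B = {x | ∃ b ∈ B, x ≤ b} := by
  apply subset_antisymm
  · apply closure_minimal
    · exact fun b hb => ⟨b, hb, le_refl b⟩
    · rw [← isOpen_compl_iff, halex]
      intro x y hxy hx hy
      exact hx (by obtain ⟨b, hb, hyb⟩ := hy; exact ⟨b, hb, hxy.trans hyb⟩)
  · rintro x ⟨b, hb, hxb⟩
    intro U hU
    obtain ⟨hUc, hBU⟩ := hU
    by_contra hx
    have : IsUpperSet Uᶜ := (halex _).mp hUc.isOpen_compl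
    exact this hxb hx (hBU hb)

/-- If `ψ : X → P` is an open continuous surjection from a Hausdorff space `X` to a poset `P`
with the Alexandrov topology, then the partition of `X` into the fibers `ψ⁻¹(s)` makes `X` a
stratified space: the fibers are nonempty, locally closed, pairwise disjoint and cover `X`,
the frontier condition holds, and closures commute with unions of fibers. -/
theorem statement7 {X P : Type*} [TopologicalSpace X] [T2Space X]
    [PartialOrder P] [TopologicalSpace P]
    (halex : ∀ U : Set P, IsOpen U ↔ IsUpperSet U)
    (ψ : X → P) (hcont : Continuous ψ) (hopen : IsOpenMap ψ)
    (hsurj : Function.Surjective ψ) :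
    (∀ s, (ψ ⁻¹' {s}).Nonempty) ∧
    (∀ s, IsLocallyClosed (ψ ⁻¹' {s})) ∧
    (∀ s t, s ≠ t → Disjoint (ψ ⁻¹' {s}) (ψ ⁻¹' {t})) ∧
    ((⋃ s, ψ ⁻¹' {s}) = Set.univ) ∧
    (∀ s t, (ψ ⁻¹' {s} ∩ closure (ψ ⁻¹' {t})).Nonempty →
      ψ ⁻¹' {s} ⊆ closure (ψ ⁻¹' {t})) ∧
    (∀ J : Set P, (⋃ s ∈ J, closure (ψ ⁻¹' {s})) = closure (⋃ s ∈ J, ψ ⁻¹' {s})) := by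
  have hpre : ∀ B : Set P, ψ ⁻¹' (closure B) = closure (ψ ⁻¹' B) :=
    fun B => hopen.preimage_closure_eq_closure_preimage hcont B
  have hclsingle : ∀ t : P, closure ({t} : Set P) = Set.Iic t := by
    intro t
    rw [alex_closure halex]
    ext x; simp [Set.mem_Iic]
  refine ⟨?_, ?_, ?_, ?_, ?_, ?_⟩
  · intro s
    obtain ⟨x, hx⟩ := hsurj s
    exact ⟨x, hx⟩
  · intro s
    have h1 : IsOpen (ψ ⁻¹' (Set.Ici s)) := by
      apply hcont.isOpen_preimage
      rw [halex]; exact isUpperSet_Ici s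
    have h2 : IsClosed (ψ ⁻¹' (Set.Iic s)) := by
      rw [← hclsingle, hpre]; exact isClosed_closure
    have : ψ ⁻¹' {s} = ψ ⁻¹' (Set.Ici s) ∩ ψ ⁻¹' (Set.Iic s) := by
      ext x; simp [le_antisymm_iff, and_comm]
    rw [this]
    exact (h1.isLocallyClosed).inter (h2.isLocallyClosed)
  · intro s t hst
    rw [Set.disjoint_iff_inter_eq_empty]
    ext x; simp only [Set.mem_inter_iff, Set.mem_preimage, Set.mem_singleton_iff,
      Set.mem_empty_iff_false, iff_false]
    rintro ⟨h1, h2⟩; exact hst (h1 ▸ h2 ▸ rfl)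
  · ext x; simp
  · intro s t ⟨x, hxs, hxt⟩
    rw [← hpre] at hxt ⊢
    intro y hy
    have : ψ x ∈ closure ({t} : Set P) := hxt
    simp only [Set.mem_preimage, Set.mem_singleton_iff] at hxs hy
    rw [Set.mem_preimage, hy, ← hxs]
    exact this
  · intro J
    have h1 : (⋃ s ∈ J, closure (ψ ⁻¹' {s})) = ψ ⁻¹' (⋃ s ∈ J, closure ({s} : Set P)) := by
      simp only [Set.preimage_iUnion, hpre]
    have h2 : (⋃ s ∈ J, closure ({s} : Set P)) = closure J := by
      rw [alex_closure halex J]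
      ext x
      simp only [Set.mem_iUnion, hclsingle, Set.mem_Iic, Set.mem_setOf_eq]
      tauto
    rw [h1, h2, hpre]
    ext x; simp
end

section
/- Let P be a poset and M a cochain complex of R-modules. The functors ⟨−⟩_{p̄} : M_{dg} → Sset_P and Ñ*_{p̄} : Sset_P → M_{dg} are adjoint (as contravariant functors): for any simplicial set L over N(P) and any M, there is a natural bijection Hom_{Sset_P}(L, ⟨M⟩_{p̄}) ≅ Hom_{M_{dg}}(M, Ñ*_{p̄}(L)), given explicitly by α(g)(x)(w) = g(w)(x) and β(f)(w)(x) = f(x)(w). -/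
open CategoryTheory

/-- The adjunction between `⟨-⟩_p̄ : M_dg → Sset_P` and `Ñ*_p̄ : Sset_P → M_dg`
(as contravariant functors), with its explicit formula.

Here `D` stands for the category `Δ[P]` of simplices of the nerve of the poset `P` (so that
presheaves `L : Dᵒᵖ ⥤ Type` are simplicial sets over `P`), and
`Msim : Dᵒᵖ ⥤ CochainComplex (ModuleCat R) ℕ` for the simplicial differential graded module
`σ ↦ M_p̄(σ, *) = Ñ*_p̄(Δ[σ])` of blown-up `p̄`-intersection cochains of standard simplices.

A morphism `L ⟶ ⟨M⟩_p̄` of simplicial sets over `P` is a natural family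
`f : ∀ σ, L.obj σ → (M ⟶ Msim.obj σ)` (since `⟨M⟩_p̄(σ) = Hom_{M_dg}(M, M_p̄(σ, *))`);
a morphism `M ⟶ Ñ*_p̄(L)` of cochain complexes is a family
`g : ∀ k, M^k → (∀ σ, L.obj σ → Ñ^k_p̄(Δ[σ]))` which is `R`-linear, commutes with the
differentials and lands in the natural families (since `Ñ^k_p̄(L) = Hom_{Sset_P}(L, M_p̄(•,k))`).
The adjunction is the bijection `α/β` determined by `β(f)(w)(x) = f(x)(w)`. -/
theorem statement19 {R : Type} [CommRing R] {D : Type*} [Category D]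
    (L : Dᵒᵖ ⥤ Type)
    (Msim : Dᵒᵖ ⥤ CochainComplex (ModuleCat.{0} R) ℕ)
    (M : CochainComplex (ModuleCat.{0} R) ℕ) :
    ∃ e :
      -- morphisms `L ⟶ ⟨M⟩_p̄` in `Sset_P`
      {f : ∀ σ : Dᵒᵖ, L.obj σ → (M ⟶ Msim.obj σ) //
        ∀ (σ τ : Dᵒᵖ) (h : σ ⟶ τ) (x : L.obj σ),
          f τ (L.map h x) = f σ x ≫ Msim.map h } ≃
      -- morphisms `M ⟶ Ñ*_p̄(L)` in `M_dg`
      {g : ∀ k : ℕ, (M.X k → ∀ σ : Dᵒᵖ, L.obj σ → (Msim.obj σ).X k) //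
        (∀ (k : ℕ) (w w' : M.X k) (σ : Dᵒᵖ) (x : L.obj σ),
          g k (w + w') σ x = g k w σ x + g k w' σ x) ∧
        (∀ (k : ℕ) (r : R) (w : M.X k) (σ : Dᵒᵖ) (x : L.obj σ),
          g k (r • w) σ x = r • g k w σ x) ∧
        (∀ (k : ℕ) (w : M.X k) (σ : Dᵒᵖ) (x : L.obj σ),
          g (k + 1) (M.d k (k + 1) w) σ x = (Msim.obj σ).d k (k + 1) (g k w σ x)) ∧
        (∀ (k : ℕ) (w : M.X k) (σ τ : Dᵒᵖ) (h : σ ⟶ τ) (x : L.obj σ),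
          g k w τ (L.map h x) = ((Msim.map h).f k) (g k w σ x)) },
      -- the bijection is given by `β(f)(w)(x) = f(x)(w)` (and `α(g)(x)(w) = g(w)(x)`)
      ∀ (f) (k : ℕ) (w : M.X k) (σ : Dᵒᵖ) (x : L.obj σ),
        (e f).1 k w σ x = ((f.1 σ x).f k) w := by

  refine ⟨{
    toFun := fun f => ⟨fun k w σ x => ((f.1 σ x).f k) w,
      fun k w w' σ x => by simp,
      fun k r w σ x => by simp,
      fun k w σ x => by
        exact (congrArg (fun φ => φ w) ((f.1 σ x).comm k (k+1))).symm,
      fun k w σ τ h x => by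
        have := congrArg (fun φ => (φ.f k) w) (f.2 σ τ h x)
        simpa using this⟩
    invFun := fun g => ⟨fun σ x =>
      { f := fun k => ModuleCat.ofHom
          { toFun := fun w => g.1 k w σ x
            map_add' := fun w w' => g.2.1 k w w' σ x
            map_smul' := fun r w => g.2.2.1 k r w σ x }
        comm' := fun i j hij => by
          obtain rfl : i + 1 = j := hij
          ext w
          exact (g.2.2.2.1 i w σ x).symm },
      fun σ τ h x => by
        ext k w
        exact g.2.2.2.2 k w σ τ h x⟩
    left_inv := fun f => by
      apply Subtype.ext
      funext σ x
      ext k w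
      rfl
    right_inv := fun g => by
      apply Subtype.ext
      rfl }, fun f k w σ x => rfl⟩
end
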